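/- arXiv:1711.01936 — 3 statements merged into one kernel-verified Lean document; each statement's English description precedes it below -/
import Mathlib

section
/- (Convergence of the inertial PC-algorithm II with outer-perturbation form, iPC II-1.) Let ν ∈ (0,1), μ ∈ [0, 1 − ν), γ ∈ (0,2), and let {α_k^{(1)}}, {α_k^{(2)}} ⊆ [0,1]. Let x^{-1}, x^0 ∈ H and let {x^k}, {y^k}, {β_k} satisfy, for every k ≥ 0: β_k > 0 with inf_k β_k > 0; y^k = P_C(x^k − β_k F(x^k) + α_k^{(1)}(x^k − x^{k−1})); β_k‖F(x^k) − F(y^k)‖ ≤ ν‖x^k − y^k‖; α_k^{(1)}‖x^k − x^{k−1}‖ ≤ μ‖x^k − y^k‖; d^k := (x^k − y^k) − β_k(F(x^k) − F(y^k)) + α_k^{(1)}(x^k − x^{k−1}) ≠ 0; ρ_k := ⟨x^k − y^k, d^k⟩/‖d^k‖²; x^{k+1} = P_C(x^k − γ ρ_k β_k F(y^k) + α_k^{(2)}(x^k − x^{k−1})). If Σ_{k=0}^∞ α_k^{(i)}‖x^k − x^{k−1}‖ < +∞ for i = 1, 2, then {x^k} converges weakly (i.e., ⟨x^k, u⟩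 → ⟨x̂, u⟩ for every u ∈ H) to some point x̂ ∈ SOL(C,F). -/
open RealInnerProductSpace

/-!
For every `p ∈ SOL(C,F)` one step of the method gives
`‖x^{k+1} - p‖² ≤ ‖x^k - p‖² - σ ‖x^k - y^k‖² + 2 α_k^{(2)} ‖x^k - x^{k-1}‖ ‖x^{k+1} - p‖`
with `σ = γ(2-γ)((1-ν-μ)/(1+ν+μ))²`: the step `ρ_k` is at least `(1-ν-μ)/(1+ν+μ)²` because
`⟪x^k - y^k, d^k⟫ ≥ (1-ν-μ)‖x^k - y^k‖²` and `‖d^k‖ ≤ (1+ν+μ)‖x^k - y^k‖`.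
Summability of the outer perturbations then makes every `‖x^k - p‖` convergent and forces
`‖x^k - y^k‖ → 0`. As `β_k⁻¹ d^k - F(y^k)` is normal to `C` at `y^k` and `d^k → 0`, monotonicity and
Minty's lemma put every weak cluster point of `(x^k)` in `SOL(C,F)`; Opial's lemma concludes.
-/

open Filter Topology

lemma le_add_of_sq_le_sq_add_mul {A B s : ℝ} (hA : 0 ≤ A) (hs : 0 ≤ s)
    (h : B ^ 2 ≤ A ^ 2 + 2 * s * B) : B ≤ A + 2 * s := by
  nlinarith [sq_nonneg (B - s - A - s)]

lemma sum_range_add_le_of_add_le_add {a c s : ℕ → ℝ} (h : ∀ k, a (k + 1) + c k ≤ a k + s k)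
    (n : ℕ) : a n + ∑ k ∈ Finset.range n, c k ≤ a 0 + ∑ k ∈ Finset.range n, s k := by
  induction n with
  | zero => simp
  | succ n ih =>
    rw [Finset.sum_range_succ, Finset.sum_range_succ]
    linarith [h n]

lemma summable_of_add_le_add_of_summable {a c s : ℕ → ℝ} (ha : ∀ k, 0 ≤ a k)
    (hc : ∀ k, 0 ≤ c k) (hs : ∀ k, 0 ≤ s k) (hsum : Summable s)
    (h : ∀ k, a (k + 1) + c k ≤ a k + s k) : Summable c :=
  summable_of_sum_range_le (c := a 0 + ∑' k, s k) hc fun n => by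
    linarith [sum_range_add_le_of_add_le_add h n, ha n,
      hsum.sum_le_tsum (Finset.range n) fun k _ => hs k]

lemma exists_tendsto_of_le_add_of_summable {a s : ℕ → ℝ} (ha : ∀ k, 0 ≤ a k)
    (hs : ∀ k, 0 ≤ s k) (hsum : Summable s) (h : ∀ k, a (k + 1) ≤ a k + s k) :
    ∃ l, Tendsto a atTop (𝓝 l) := by
  set g : ℕ → ℝ := fun n => a n - ∑ k ∈ Finset.range n, s k
  have hg : Antitone g := antitone_nat_of_succ_le fun n => by
    simp only [g, Finset.sum_range_succ]
    linarith [h n]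
  have hgb : BddBelow (Set.range g) := ⟨-∑' k, s k, by
    rintro _ ⟨n, rfl⟩
    linarith [ha n, hsum.sum_le_tsum (Finset.range n) fun k _ => hs k]⟩
  refine ⟨_, (tendsto_atTop_ciInf hg hgb).add hsum.hasSum.tendsto_sum_nat |>.congr fun n => ?_⟩
  simp [g]

lemma exists_tendsto_and_tendsto_zero_of_sq_le {a c s : ℕ → ℝ} {σ : ℝ} (hσ : 0 < σ)
    (ha : ∀ k, 0 ≤ a k) (hs : ∀ k, 0 ≤ s k) (hsum : Summable s)
    (h : ∀ k, a (k + 1) ^ 2 ≤ a k ^ 2 - σ * c k ^ 2 + 2 * s k * a (k + 1)) :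
    (∃ l, Tendsto a atTop (𝓝 l)) ∧ Tendsto c atTop (𝓝 0) := by
  have hstep : ∀ k, a (k + 1) ≤ a k + 2 * s k := fun k =>
    le_add_of_sq_le_sq_add_mul (ha k) (hs k) (by nlinarith [h k, sq_nonneg (c k)])
  obtain ⟨l, hl⟩ := exists_tendsto_of_le_add_of_summable ha (fun k => by linarith [hs k])
    (hsum.mul_left 2) hstep
  obtain ⟨M, hM⟩ := hl.bddAbove_range
  have hc : Summable fun k => σ * c k ^ 2 :=
    summable_of_add_le_add_of_summable (a := fun k => a k ^ 2) (s := fun k => 2 * M * s k)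
      (fun k => sq_nonneg _) (fun k => by positivity)
      (fun k => by nlinarith [hs k, ha 0, hM ⟨0, rfl⟩]) (hsum.mul_left _)
      fun k => by nlinarith [h k, hM ⟨k + 1, rfl⟩, hs k]
  refine ⟨⟨l, hl⟩, ?_⟩
  have hc₂ : Tendsto (fun k => c k ^ 2) atTop (𝓝 0) := by
    simpa [← mul_assoc, hσ.ne'] using (hc.mul_left σ⁻¹).tendsto_atTop_zero
  rw [tendsto_zero_iff_abs_tendsto_zero]
  simpa [Function.comp_def, Real.sqrt_sq_eq_abs] using hc₂.sqrt

lemma exists_norm_le_of_tendsto_norm_sub {E : Type*} [SeminormedAddCommGroup E] {x : ℕ → E}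
    {q : E} {r : ℝ} (h : Tendsto (fun k => ‖x k - q‖) atTop (𝓝 r)) : ∃ K, ∀ k, ‖x k‖ ≤ K := by
  obtain ⟨M, hM⟩ := h.bddAbove_range
  exact ⟨M + ‖q‖, fun k => (norm_le_insert' (x k) q).trans (by linarith [hM ⟨k, rfl⟩])⟩

lemma norm_sub_smul_add_smul_le {E : Type*} [SeminormedAddCommGroup E] [NormedSpace ℝ E]
    {a b c : E} {β α ν μ : ℝ} (hβ : 0 ≤ β) (hα : 0 ≤ α) (hb : β * ‖b‖ ≤ ν * ‖a‖)
    (hc : α * ‖c‖ ≤ μ * ‖a‖) : ‖a - β • b + α • c‖ ≤ (1 + ν + μ) * ‖a‖ := by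
  have h₁ := norm_add_le (a - β • b) (α • c)
  have h₂ := norm_sub_le a (β • b)
  rw [norm_smul, Real.norm_of_nonneg hα] at h₁
  rw [norm_smul, Real.norm_of_nonneg hβ] at h₂
  linarith

section InnerProductSpace

lemma continuous_of_norm_sub_le_mul {E E' : Type*} [SeminormedAddCommGroup E]
    [SeminormedAddCommGroup E'] {f : E → E'} {L : ℝ} (h : ∀ u v, ‖f u - f v‖ ≤ L * ‖u - v‖) :
    Continuous f :=
  (LipschitzWith.of_dist_le_mul (K := L.toNNReal) fun u v => by
    simpa [dist_eq_norm] using (h u v).trans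
      (mul_le_mul_of_nonneg_right (Real.le_coe_toNNReal L) (norm_nonneg _))).continuous

variable {H : Type*} [NormedAddCommGroup H] [InnerProductSpace ℝ H]

def viSolutionSet (C : Set H) (F : H → H) : Set H :=
  {p | p ∈ C ∧ ∀ z ∈ C, 0 ≤ ⟪F p, z - p⟫}

def WeakTendsto {ι : Type*} (x : ι → H) (l : Filter ι) (a : H) : Prop :=
  ∀ u, Tendsto (fun k => ⟪x k, u⟫) l (𝓝 ⟪a, u⟫)

def IsWeakClusterPt (x : ℕ → H) (a : H) : Prop :=
  ∃ G ≤ atTop, G.NeBot ∧ WeakTendsto x G a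

namespace WeakTendsto

variable {ι : Type*} {x y : ι → H} {l : Filter ι} {a : H}

lemma of_tendsto_norm_sub (h : WeakTendsto x l a)
    (hxy : Tendsto (fun k => ‖x k - y k‖) l (𝓝 0)) : WeakTendsto y l a := fun u => by
  have hdiff : Tendsto (fun k => ⟪x k - y k, u⟫) l (𝓝 0) :=
    squeeze_zero_norm (fun k => norm_inner_le_norm _ _) (by simpa using hxy.mul_const ‖u‖)
  simpa [inner_sub_left] using (h u).sub hdiff

/-- In the limit the obtuse-angle condition at `a` becomes `‖a - q‖² ≤ 0`. -/
lemma mem_of_inner_le [l.NeBot] {C : Set H} {q : H} (h : WeakTendsto x l a)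
    (hx : ∀ᶠ k in l, x k ∈ C) (hq : q ∈ C) (hqa : ∀ c ∈ C, ⟪a - q, c - q⟫ ≤ 0) : a ∈ C := by
  have hlim : Tendsto (fun k => ⟪a - q, x k - q⟫) l (𝓝 ⟪a - q, a - q⟫) := by
    have e : ∀ v, ⟪a - q, v - q⟫ = ⟪v, a - q⟫ - ⟪q, a - q⟫ := fun v => by
      rw [← inner_sub_left, real_inner_comm]
    simp_rw [e]
    exact (h (a - q)).sub_const _
  have haq := le_of_tendsto hlim (hx.mono fun k hk => hqa _ hk)
  rw [real_inner_self_nonpos, sub_eq_zero] at haq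
  exact haq ▸ hq

end WeakTendsto

lemma exists_weakTendsto_of_norm_le [CompleteSpace H] {ι : Type*} {x : ι → H} {K : ℝ}
    (hK : ∀ k, ‖x k‖ ≤ K) (l : Filter ι) [l.NeBot] :
    ∃ a, ∃ G ≤ l, G.NeBot ∧ WeakTendsto x G a := by
  let T : ι → WeakDual ℝ H := fun k => InnerProductSpace.toDual ℝ H (x k)
  have hTS : ∀ k, T k ∈ WeakDual.toStrongDual ⁻¹' Metric.closedBall 0 K := fun k => by
    simp only [Set.mem_preimage, Metric.mem_closedBall, dist_zero_right]
    exact ((InnerProductSpace.toDual ℝ H).norm_map (x k)).trans_le (hK k)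
  have hle : map T l ≤ 𝓟 (WeakDual.toStrongDual ⁻¹' Metric.closedBall 0 K) :=
    le_principal_iff.2 (mem_map.2 (univ_mem' hTS))
  obtain ⟨φ, -, hφ⟩ := (WeakDual.isCompact_closedBall 0 K).exists_clusterPt hle
  have hmap : map T (l ⊓ comap T (𝓝 φ)) = map T l ⊓ 𝓝 φ := Filter.push_pull T l (𝓝 φ)
  refine ⟨(InnerProductSpace.toDual ℝ H).symm (WeakDual.toStrongDual φ), l ⊓ comap T (𝓝 φ),
    inf_le_left, ?_, fun u => ?_⟩
  · rw [← map_neBot_iff T, hmap, inf_comm]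
    exact hφ
  · have hT : Tendsto T (l ⊓ comap T (𝓝 φ)) (𝓝 φ) := by
      rw [Tendsto, hmap]
      exact inf_le_right
    have hφu : ⟪(InnerProductSpace.toDual ℝ H).symm (WeakDual.toStrongDual φ), u⟫ = φ u := by
      rw [← InnerProductSpace.toDual_apply_apply]
      simp
    rw [hφu]
    exact (((WeakDual.eval_continuous u).tendsto φ).comp hT).congr fun k =>
      InnerProductSpace.toDual_apply_apply

lemma IsWeakClusterPt.eq_of_tendsto_norm_sub {x : ℕ → H} {a b : H} {r s : ℝ}
    (ha : IsWeakClusterPt x a) (hb : IsWeakClusterPt x b)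
    (hr : Tendsto (fun k => ‖x k - a‖) atTop (𝓝 r))
    (hs : Tendsto (fun k => ‖x k - b‖) atTop (𝓝 s)) : a = b := by
  obtain ⟨G₁, hG₁, _, ha⟩ := ha
  obtain ⟨G₂, hG₂, _, hb⟩ := hb
  have hpolar : ∀ k, ⟪x k, b - a⟫ = (‖x k - a‖ ^ 2 - ‖x k - b‖ ^ 2 - ‖a‖ ^ 2 + ‖b‖ ^ 2) / 2 :=
    fun k => by rw [inner_sub_right, norm_sub_sq_real, norm_sub_sq_real]; ring
  have hlim : Tendsto (fun k => ⟪x k, b - a⟫) atTop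
      (𝓝 ((r ^ 2 - s ^ 2 - ‖a‖ ^ 2 + ‖b‖ ^ 2) / 2)) := by
    simp_rw [hpolar]
    exact ((((hr.pow 2).sub (hs.pow 2)).sub_const _).add_const _).div_const 2
  have h₁ := tendsto_nhds_unique (ha (b - a)) (hlim.mono_left hG₁)
  have h₂ := tendsto_nhds_unique (hb (b - a)) (hlim.mono_left hG₂)
  have : ⟪b - a, b - a⟫ = 0 := by rw [inner_sub_left, h₁, h₂, sub_self]
  exact (sub_eq_zero.1 (inner_self_eq_zero.1 this)).symm

theorem exists_weakTendsto_of_forall_isWeakClusterPt_mem [CompleteSpace H] {x : ℕ → H}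
    {S : Set H} (hS : S.Nonempty)
    (hdist : ∀ q ∈ S, ∃ r, Tendsto (fun k => ‖x k - q‖) atTop (𝓝 r))
    (hclu : ∀ a, IsWeakClusterPt x a → a ∈ S) : ∃ a ∈ S, WeakTendsto x atTop a := by
  obtain ⟨p, hp⟩ := hS
  obtain ⟨K, hK⟩ := exists_norm_le_of_tendsto_norm_sub (hdist p hp).choose_spec
  obtain ⟨a, G, hG, _, hxa⟩ := exists_weakTendsto_of_norm_le hK atTop
  have ha : a ∈ S := hclu a ⟨G, hG, ‹_›, hxa⟩
  refine ⟨a, ha, fun u => by_contra fun hu => ?_⟩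
  obtain ⟨s, hs, hfreq⟩ := not_tendsto_iff_exists_frequently_notMem.1 hu
  have := frequently_iff_neBot.1 hfreq
  obtain ⟨b, G', hG', _, hxb⟩ :=
    exists_weakTendsto_of_norm_le hK (atTop ⊓ 𝓟 {k | ⟪x k, u⟫ ∉ s})
  have hb : IsWeakClusterPt x b := ⟨G', hG'.trans inf_le_left, ‹_›, hxb⟩
  obtain rfl : b = a := hb.eq_of_tendsto_norm_sub ⟨G, hG, ‹_›, hxa⟩
    (hdist b (hclu b hb)).choose_spec (hdist a ha).choose_spec
  have hin : ∀ᶠ k in G', ⟪x k, u⟫ ∈ s := hxb u hs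
  have hout : ∀ᶠ k in G', ⟪x k, u⟫ ∉ s := hG'.trans inf_le_right (mem_principal_self _)
  obtain ⟨k, hk⟩ := (hin.and hout).exists
  exact hk.2 hk.1

section VariationalInequality

variable {C : Set H} {F : H → H}

lemma inner_sub_nonneg_of_mem_viSolutionSet (hmono : ∀ u v, 0 ≤ ⟪F u - F v, u - v⟫)
    {p y : H} (hp : p ∈ viSolutionSet C F) (hy : y ∈ C) : 0 ≤ ⟪F y, y - p⟫ := by
  have := hmono y p
  rw [inner_sub_left] at this
  linarith [hp.2 y hy]

lemma mem_viSolutionSet_of_inner_sub_nonneg (hC : Convex ℝ C) (hF : Continuous F) {a : H}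
    (ha : a ∈ C) (h : ∀ z ∈ C, 0 ≤ ⟪F z, z - a⟫) : a ∈ viSolutionSet C F := by
  refine ⟨ha, fun z hz => ?_⟩
  have hlim : Tendsto (fun t : ℝ => ⟪F (a + t • (z - a)), z - a⟫) (𝓝[>] 0)
      (𝓝 ⟪F a, z - a⟫) := by
    have : Continuous fun t : ℝ => ⟪F (a + t • (z - a)), z - a⟫ := by fun_prop
    simpa using (this.tendsto 0).mono_left nhdsWithin_le_nhds
  refine ge_of_tendsto hlim ?_
  filter_upwards [Ioo_mem_nhdsGT one_pos] with t ht
  have := h _ (hC.add_smul_sub_mem ha hz ⟨ht.1.le, ht.2.le⟩)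
  rw [add_sub_cancel_left, real_inner_smul_right] at this
  exact nonneg_of_mul_nonneg_right this ht.1

lemma mem_viSolutionSet_of_weakTendsto (hC : Convex ℝ C) (hF : Continuous F)
    (hmono : ∀ u v, 0 ≤ ⟪F u - F v, u - v⟫) {ι : Type*} {l : Filter ι} [l.NeBot]
    {x y e : ι → H} {a : H} {K : ℝ} (hK : ∀ k, ‖x k‖ ≤ K)
    (hxy : Tendsto (fun k => ‖x k - y k‖) l (𝓝 0))
    (hy : ∀ k, ∀ z ∈ C, ⟪e k - F (y k), z - y k⟫ ≤ 0)
    (he : Tendsto (fun k => ‖e k‖) l (𝓝 0)) (hxa : WeakTendsto x l a) (ha : a ∈ C) :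
    a ∈ viSolutionSet C F := by
  refine mem_viSolutionSet_of_inner_sub_nonneg hC hF ha fun z hz => ?_
  have hlow : ∀ k, -(‖e k‖ * (‖z‖ + K + ‖x k - y k‖)) ≤ ⟪F z, z - y k⟫ := fun k => by
    have hFy : ⟪F (y k), z - y k⟫ ≤ ⟪F z, z - y k⟫ := by
      have := hmono z (y k)
      rw [inner_sub_left] at this
      linarith
    have he' := neg_le_of_abs_le (abs_real_inner_le_norm (e k) (z - y k))
    have hzy : ‖z - y k‖ ≤ ‖z‖ + K + ‖x k - y k‖ := by
      linarith [norm_sub_le z (y k), norm_le_insert (x k) (y k), hK k]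
    have := hy k z hz
    rw [inner_sub_left] at this
    nlinarith [mul_le_mul_of_nonneg_left hzy (norm_nonneg (e k))]
  have hlim₁ : Tendsto (fun k => -(‖e k‖ * (‖z‖ + K + ‖x k - y k‖))) l (𝓝 0) := by
    simpa using (he.mul (tendsto_const_nhds.add hxy)).neg
  have hlim₂ : Tendsto (fun k => ⟪F z, z - y k⟫) l (𝓝 ⟪F z, z - a⟫) := by
    simp only [inner_sub_left, real_inner_comm _ (F z)]
    exact tendsto_const_nhds.sub (hxa.of_tendsto_norm_sub hxy (F z))
  exact le_of_tendsto_of_tendsto' hlim₁ hlim₂ hlow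

end VariationalInequality

lemma mul_norm_sq_le_inner_sub_smul_add_smul {a b c : H} {β α ν μ : ℝ} (hβ : 0 ≤ β)
    (hα : 0 ≤ α) (hb : β * ‖b‖ ≤ ν * ‖a‖) (hc : α * ‖c‖ ≤ μ * ‖a‖) :
    (1 - ν - μ) * ‖a‖ ^ 2 ≤ ⟪a, a - β • b + α • c⟫ := by
  have hab := mul_le_mul_of_nonneg_left (real_inner_le_norm a b) hβ
  have hac := mul_le_mul_of_nonneg_left (neg_le_of_abs_le (abs_real_inner_le_norm a c)) hα
  rw [inner_add_right, inner_sub_right, real_inner_self_eq_norm_sq, real_inner_smul_right,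
    real_inner_smul_right]
  nlinarith [norm_nonneg a]

lemma div_sq_le_inner_div_norm_sq {a D : H} {θ Θ : ℝ} (hθ : 0 ≤ θ) (hD : D ≠ 0)
    (h₁ : θ * ‖a‖ ^ 2 ≤ ⟪a, D⟫) (h₂ : ‖D‖ ≤ Θ * ‖a‖) : θ / Θ ^ 2 ≤ ⟪a, D⟫ / ‖D‖ ^ 2 := by
  have hD₀ := norm_pos_iff.2 hD
  have hΘ : Θ ≠ 0 := by
    rintro rfl
    linarith
  rw [div_le_div_iff₀ (by positivity) (by positivity)]
  nlinarith [mul_le_mul h₂ h₂ hD₀.le (hD₀.le.trans h₂)]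

/-- One projection–contraction step in the abstract: `g = β F(Y)`, `t = γρ`, `E = x^k - x^{k-1}`,
`D - g` is normal to `C` at `Y`, and `V` is the projection of the corrected point. -/
lemma norm_sub_sq_le_of_inner_nonpos {X Y V p D g E : H} {t α : ℝ} (ht : 0 ≤ t) (hα : 0 ≤ α)
    (hV : ⟪X - t • g + α • E - V, p - V⟫ ≤ 0) (hY : ⟪D - g, V - Y⟫ ≤ 0)
    (hgY : 0 ≤ ⟪g, Y - p⟫) :
    ‖V - p‖ ^ 2 ≤ ‖X - p‖ ^ 2 - (2 * t * ⟪X - Y, D⟫ - t ^ 2 * ‖D‖ ^ 2)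
      + 2 * (α * ‖E‖) * ‖V - p‖ := by
  have hXp : ‖X - p‖ ^ 2 = ‖X - V‖ ^ 2 + 2 * ⟪X - V, V - p⟫ + ‖V - p‖ ^ 2 := by
    rw [← norm_add_sq_real, sub_add_sub_cancel]
  have hV' : 0 ≤ ⟪X - V, V - p⟫ + α * ⟪E, V - p⟫ - t * ⟪g, V - p⟫ := by
    rw [show X - t • g + α • E - V = X - V + α • E - t • g by abel, ← neg_sub V p,
      inner_neg_right, inner_sub_left, inner_add_left, real_inner_smul_left,
      real_inner_smul_left] at hV
    linarith
  have hg : ⟪D, X - Y⟫ - ⟪D, X - V⟫ ≤ ⟪g, V - p⟫ := by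
    rw [← inner_sub_right, sub_sub_sub_cancel_left, ← sub_add_sub_cancel V Y p,
      inner_add_right]
    rw [inner_sub_left] at hY
    linarith
  have hsq : 2 * t * ⟪D, X - V⟫ ≤ ‖X - V‖ ^ 2 + t ^ 2 * ‖D‖ ^ 2 := by
    have := norm_sub_sq_real (X - V) (t • D)
    rw [real_inner_smul_right, norm_smul, mul_pow, Real.norm_eq_abs, sq_abs,
      real_inner_comm] at this
    nlinarith [sq_nonneg ‖X - V - t • D‖]
  have hE := mul_le_mul_of_nonneg_left (real_inner_le_norm E (V - p)) hα
  rw [real_inner_comm D (X - Y)]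
  nlinarith [mul_le_mul_of_nonneg_left hg ht]

section Iteration

variable {C : Set H} {P F : H → H} {X Xm Y D : H} {β α₁ : ℝ}

lemma inner_sub_smul_nonpos_of_eq_proj (hPchar : ∀ u, ∀ c ∈ C, ⟪u - P u, c - P u⟫ ≤ 0)
    (hY : Y = P (X - β • F X + α₁ • (X - Xm)))
    (hD : D = X - Y - β • (F X - F Y) + α₁ • (X - Xm)) :
    ∀ c ∈ C, ⟪D - β • F Y, c - Y⟫ ≤ 0 := by
  have : D - β • F Y = X - β • F X + α₁ • (X - Xm) - Y := by
    rw [hD]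
    module
  rw [this, hY]
  exact hPchar _

lemma inner_inv_smul_sub_nonpos_of_eq_proj (hPchar : ∀ u, ∀ c ∈ C, ⟪u - P u, c - P u⟫ ≤ 0)
    (hβ : 0 < β) (hY : Y = P (X - β • F X + α₁ • (X - Xm)))
    (hD : D = X - Y - β • (F X - F Y) + α₁ • (X - Xm)) :
    ∀ c ∈ C, ⟪β⁻¹ • D - F Y, c - Y⟫ ≤ 0 := fun c hc => by
  rw [← inv_smul_smul₀ hβ.ne' (F Y), ← smul_sub, real_inner_smul_left]
  exact mul_nonpos_of_nonneg_of_nonpos (inv_nonneg.2 hβ.le)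
    (inner_sub_smul_nonpos_of_eq_proj hPchar hY hD c hc)

lemma norm_inv_smul_le_of_le {b ν μ : ℝ} (hb : 0 < b) (hbβ : b ≤ β) (hα₁ : 0 ≤ α₁)
    (hstep : β * ‖F X - F Y‖ ≤ ν * ‖X - Y‖) (hα₁b : α₁ * ‖X - Xm‖ ≤ μ * ‖X - Y‖)
    (hD : D = X - Y - β • (F X - F Y) + α₁ • (X - Xm)) :
    ‖β⁻¹ • D‖ ≤ b⁻¹ * (1 + ν + μ) * ‖X - Y‖ := by
  have hβ := hb.trans_le hbβ
  rw [norm_smul, norm_inv, Real.norm_of_nonneg hβ.le, mul_assoc]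
  exact mul_le_mul (inv_anti₀ hb hbβ) (hD ▸ norm_sub_smul_add_smul_le hβ.le hα₁ hstep hα₁b)
    (norm_nonneg _) (inv_nonneg.2 hb.le)

lemma norm_pcStep_sub_sq_le (hPmem : ∀ u, P u ∈ C)
    (hPchar : ∀ u, ∀ c ∈ C, ⟪u - P u, c - P u⟫ ≤ 0) (hmono : ∀ u v, 0 ≤ ⟪F u - F v, u - v⟫)
    {p V : H} (hp : p ∈ viSolutionSet C F) {ν μ γ ρ α₂ : ℝ} (hνμ : ν + μ < 1) (hγ₀ : 0 ≤ γ)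
    (hγ₂ : γ ≤ 2) (hβ : 0 ≤ β) (hα₁ : 0 ≤ α₁) (hα₂ : 0 ≤ α₂)
    (hY : Y = P (X - β • F X + α₁ • (X - Xm)))
    (hstep : β * ‖F X - F Y‖ ≤ ν * ‖X - Y‖) (hα₁b : α₁ * ‖X - Xm‖ ≤ μ * ‖X - Y‖)
    (hD : D = X - Y - β • (F X - F Y) + α₁ • (X - Xm)) (hD₀ : D ≠ 0)
    (hρ : ρ = ⟪X - Y, D⟫ / ‖D‖ ^ 2)
    (hV : V = P (X - (γ * ρ * β) • F Y + α₂ • (X - Xm))) :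
    ‖V - p‖ ^ 2 ≤ ‖X - p‖ ^ 2 - γ * (2 - γ) * ((1 - ν - μ) / (1 + ν + μ)) ^ 2 * ‖X - Y‖ ^ 2
      + 2 * (α₂ * ‖X - Xm‖) * ‖V - p‖ := by
  have hinner : (1 - ν - μ) * ‖X - Y‖ ^ 2 ≤ ⟪X - Y, D⟫ :=
    hD ▸ mul_norm_sq_le_inner_sub_smul_add_smul hβ hα₁ hstep hα₁b
  have hρ₀ : (1 - ν - μ) / (1 + ν + μ) ^ 2 ≤ ρ := hρ ▸ div_sq_le_inner_div_norm_sq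
    (by linarith) hD₀ hinner (hD ▸ norm_sub_smul_add_smul_le hβ hα₁ hstep hα₁b)
  have hρ₁ : 0 ≤ ρ := hρ₀.trans' (div_nonneg (by linarith) (sq_nonneg _))
  have hρD : ρ * ‖D‖ ^ 2 = ⟪X - Y, D⟫ := by
    rw [hρ, div_mul_cancel₀ _ (pow_ne_zero 2 (norm_ne_zero_iff.2 hD₀))]
  have hdesc := norm_sub_sq_le_of_inner_nonpos (t := γ * ρ) (E := X - Xm)
    (mul_nonneg hγ₀ hρ₁) hα₂
    (by rw [smul_smul, hV]; exact hPchar _ p hp.1)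
    (inner_sub_smul_nonpos_of_eq_proj hPchar hY hD V (hV ▸ hPmem _))
    (by rw [real_inner_smul_left]
        exact mul_nonneg hβ (inner_sub_nonneg_of_mem_viSolutionSet hmono hp (hY ▸ hPmem _)))
  have hgain : γ * (2 - γ) * ((1 - ν - μ) / (1 + ν + μ)) ^ 2 * ‖X - Y‖ ^ 2
      ≤ 2 * (γ * ρ) * ⟪X - Y, D⟫ - (γ * ρ) ^ 2 * ‖D‖ ^ 2 :=
    calc γ * (2 - γ) * ((1 - ν - μ) / (1 + ν + μ)) ^ 2 * ‖X - Y‖ ^ 2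
        = γ * (2 - γ) * ((1 - ν - μ) / (1 + ν + μ) ^ 2 * ((1 - ν - μ) * ‖X - Y‖ ^ 2)) := by
          rw [div_pow]
          ring
      _ ≤ γ * (2 - γ) * (ρ * ⟪X - Y, D⟫) := by
        gcongr
        exact mul_nonneg (by linarith) (sq_nonneg _)
      _ = 2 * (γ * ρ) * ⟪X - Y, D⟫ - (γ * ρ) ^ 2 * ‖D‖ ^ 2 := by
        rw [← hρD]
        ring
  linarith

end Iteration

end InnerProductSpace

theorem stmt_15_general {H : Type*} [NormedAddCommGroup H] [InnerProductSpace ℝ H]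
    [CompleteSpace H]
    (C : Set H) (hCcv : Convex ℝ C)
    (P : H → H) (hPmem : ∀ u : H, P u ∈ C)
    (hPchar : ∀ u : H, ∀ c ∈ C, ⟪u - P u, c - P u⟫ ≤ 0)
    (F : H → H) (hmono : ∀ u v : H, 0 ≤ ⟪F u - F v, u - v⟫)
    (L : ℝ) (hLip : ∀ u v : H, ‖F u - F v‖ ≤ L * ‖u - v‖)
    (hSOL : ∃ p ∈ C, ∀ z ∈ C, 0 ≤ ⟪F p, z - p⟫)
    (ν μ γ : ℝ) (hν : ν ∈ Set.Ioo (0 : ℝ) 1) (hμ : μ ∈ Set.Ico (0 : ℝ) (1 - ν))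
    (hγ : γ ∈ Set.Ioo (0 : ℝ) 2)
    (α1 α2 : ℕ → ℝ) (hα1 : ∀ k, α1 k ∈ Set.Icc (0 : ℝ) 1)
    (hα2 : ∀ k, α2 k ∈ Set.Icc (0 : ℝ) 1)
    (x xm y : ℕ → H) (β : ℕ → ℝ) (d : ℕ → H) (ρ : ℕ → ℝ)
    (hβinf : ∃ b > (0 : ℝ), ∀ k, b ≤ β k)
    (hy : ∀ k, y k = P (x k - β k • F (x k) + α1 k • (x k - xm k)))
    (hstep : ∀ k, β k * ‖F (x k) - F (y k)‖ ≤ ν * ‖x k - y k‖)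
    (hα1b : ∀ k, α1 k * ‖x k - xm k‖ ≤ μ * ‖x k - y k‖)
    (hd : ∀ k, d k = (x k - y k) - β k • (F (x k) - F (y k)) + α1 k • (x k - xm k))
    (hdne : ∀ k, d k ≠ 0)
    (hρ : ∀ k, ρ k = ⟪x k - y k, d k⟫ / ‖d k‖ ^ 2)
    (hx : ∀ k, x (k + 1) = P (x k - (γ * ρ k * β k) • F (y k) + α2 k • (x k - xm k)))
    (hsum2 : Summable (fun k => α2 k * ‖x k - xm k‖)) :
    ∃ xhat, (xhat ∈ C ∧ ∀ z ∈ C, 0 ≤ ⟪F xhat, z - xhat⟫) ∧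
      ∀ u : H, Filter.Tendsto (fun k => ⟪x k, u⟫) Filter.atTop (nhds ⟪xhat, u⟫) := by
  obtain ⟨b, hb, hbβ⟩ := hβinf
  have hβ : ∀ k, 0 < β k := fun k => hb.trans_le (hbβ k)
  have hσ : 0 < γ * (2 - γ) * ((1 - ν - μ) / (1 + ν + μ)) ^ 2 :=
    mul_pos (mul_pos hγ.1 (by linarith [hγ.2]))
      (pow_pos (div_pos (by linarith [hμ.2]) (by linarith [hν.1, hμ.1])) 2)
  have hfejer : ∀ p ∈ viSolutionSet C F, (∃ r, Tendsto (fun k => ‖x k - p‖) atTop (𝓝 r)) ∧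
      Tendsto (fun k => ‖x k - y k‖) atTop (𝓝 0) := fun p hp =>
    exists_tendsto_and_tendsto_zero_of_sq_le hσ (fun k => norm_nonneg _)
      (fun k => mul_nonneg (hα2 k).1 (norm_nonneg _)) hsum2 fun k =>
      norm_pcStep_sub_sq_le hPmem hPchar hmono hp (by linarith [hμ.2]) hγ.1.le hγ.2.le
        (hβ k).le (hα1 k).1 (hα2 k).1 (hy k) (hstep k) (hα1b k) (hd k) (hdne k) (hρ k) (hx k)
  obtain ⟨p, hp⟩ := hSOL
  obtain ⟨K, hK⟩ := exists_norm_le_of_tendsto_norm_sub (hfejer p hp).1.choose_spec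
  have he : Tendsto (fun k => ‖(β k)⁻¹ • d k‖) atTop (𝓝 0) :=
    squeeze_zero (fun k => norm_nonneg _)
      (fun k => norm_inv_smul_le_of_le hb (hbβ k) (hα1 k).1 (hstep k) (hα1b k) (hd k))
      (by simpa using (hfejer p hp).2.const_mul (b⁻¹ * (1 + ν + μ)))
  refine exists_weakTendsto_of_forall_isWeakClusterPt_mem ⟨p, hp⟩ (fun q hq => (hfejer q hq).1) ?_
  rintro a ⟨G, hG, _, hxa⟩
  have hyC : ∀ k, y k ∈ C := fun k => hy k ▸ hPmem _
  have hxy := (hfejer p hp).2.mono_left hG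
  exact mem_viSolutionSet_of_weakTendsto hCcv (continuous_of_norm_sub_le_mul hLip) hmono hK hxy
    (fun k => inner_inv_smul_sub_nonpos_of_eq_proj hPchar (hβ k) (hy k) (hd k)) (he.mono_left hG)
    hxa ((hxa.of_tendsto_norm_sub hxy).mem_of_inner_le (.of_forall hyC) (hPmem a) (hPchar a))

/-- `xm k` plays the role of `x^{k-1}` (with `xm 0` the arbitrary starting point `x^{-1}`). -/
theorem stmt_15 {H : Type*} [NormedAddCommGroup H] [InnerProductSpace ℝ H]
    [CompleteSpace H]
    (C : Set H) (hCne : C.Nonempty) (hCcl : IsClosed C) (hCcv : Convex ℝ C)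
    (P : H → H) (hPmem : ∀ u : H, P u ∈ C)
    (hPchar : ∀ u : H, ∀ c ∈ C, ⟪u - P u, c - P u⟫ ≤ 0)
    (F : H → H) (hmono : ∀ u v : H, 0 ≤ ⟪F u - F v, u - v⟫)
    (L : ℝ) (hL : 0 < L) (hLip : ∀ u v : H, ‖F u - F v‖ ≤ L * ‖u - v‖)
    (hSOL : ∃ p ∈ C, ∀ z ∈ C, 0 ≤ ⟪F p, z - p⟫)
    (ν μ γ : ℝ) (hν : ν ∈ Set.Ioo (0 : ℝ) 1) (hμ : μ ∈ Set.Ico (0 : ℝ) (1 - ν))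
    (hγ : γ ∈ Set.Ioo (0 : ℝ) 2)
    (α1 α2 : ℕ → ℝ) (hα1 : ∀ k, α1 k ∈ Set.Icc (0 : ℝ) 1)
    (hα2 : ∀ k, α2 k ∈ Set.Icc (0 : ℝ) 1)
    (x xm y : ℕ → H) (β : ℕ → ℝ) (d : ℕ → H) (ρ : ℕ → ℝ)
    (hxm : ∀ k, xm (k + 1) = x k)
    (hβpos : ∀ k, 0 < β k) (hβinf : ∃ b > (0 : ℝ), ∀ k, b ≤ β k)
    (hy : ∀ k, y k = P (x k - β k • F (x k) + α1 k • (x k - xm k)))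
    (hstep : ∀ k, β k * ‖F (x k) - F (y k)‖ ≤ ν * ‖x k - y k‖)
    (hα1b : ∀ k, α1 k * ‖x k - xm k‖ ≤ μ * ‖x k - y k‖)
    (hd : ∀ k, d k = (x k - y k) - β k • (F (x k) - F (y k)) + α1 k • (x k - xm k))
    (hdne : ∀ k, d k ≠ 0)
    (hρ : ∀ k, ρ k = ⟪x k - y k, d k⟫ / ‖d k‖ ^ 2)
    (hx : ∀ k, x (k + 1) = P (x k - (γ * ρ k * β k) • F (y k) + α2 k • (x k - xm k)))
    (hsum1 : Summable (fun k => α1 k * ‖x k - xm k‖))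
    (hsum2 : Summable (fun k => α2 k * ‖x k - xm k‖)) :
    ∃ xhat, (xhat ∈ C ∧ ∀ z ∈ C, 0 ≤ ⟪F xhat, z - xhat⟫) ∧
      ∀ u : H, Filter.Tendsto (fun k => ⟪x k, u⟫) Filter.atTop (nhds ⟪xhat, u⟫) :=
  stmt_15_general C hCcv P hPmem hPchar F hmono L hLip hSOL ν μ γ hν hμ hγ α1 α2 hα1 hα2 x xm y β d
    ρ hβinf hy hstep hα1b hd hdne hρ hx hsum2
end

section
/- (Convergence of the inertial PC-algorithm II with bounded-perturbation form, iPC II-2.) Let ν ∈ (0,1), γ ∈ (0,2), and let {α_k} ⊆ [0,1]. Let x^{-1}, x^0 ∈ H and let {x^k}, {y^k}, {β_k} satisfy, for every k ≥ 0, with w^k := x^k + α_k(x^k − x^{k−1}): β_k > 0 with inf_k β_k > 0; y^k = P_C(w^k − β_k F(w^k)); β_k‖F(w^k) − F(y^k)‖ ≤ ν‖w^k − y^k‖; d^k := (w^k − y^k) − β_k(F(w^k) − F(y^k)) ≠ 0; ρ_k := ⟨w^k − y^k, d^k⟩/‖d^k‖²; x^{k+1} = P_C(w^k − γ ρ_k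 β_k F(y^k)). If Σ_{k=0}^∞ α_k‖x^k − x^{k−1}‖ < +∞, then {x^k} converges weakly (i.e., ⟨x^k, u⟩ → ⟨x̂, u⟩ for every u ∈ H) to some point x̂ ∈ SOL(C,F). -/
/-
For every solution `q`, one step of the method gives
`‖x^{k+1} - q‖² + κ ‖w^k - y^k‖² ≤ ‖w^k - q‖²` with `κ = γ (2 - γ) ((1 - ν) / (1 + ν))²`, while
`‖w^k - x^k‖ = α_k ‖x^k - x^{k-1}‖` is summable. Hence `‖x^k - q‖` converges for every solution `q`
and `‖w^k - y^k‖ → 0`. A weak cluster point of `(x^k)` is then one of `(y^k)`; it lies in `C`, and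
passing to the limit in the projection inequality defining `y^k` gives Minty's form of the
variational inequality, so it is a solution. Opial's lemma turns this into weak convergence of the
whole sequence.
-/

open RealInnerProductSpace Filter Topology

lemma exists_tendsto_of_le_add_summable {a ε : ℕ → ℝ} (ha : ∀ k, 0 ≤ a k)
    (hrec : ∀ k, a (k + 1) ≤ a k + ε k) (hε : Summable ε) :
    ∃ l, Tendsto a atTop (𝓝 l) := by
  set b : ℕ → ℝ := fun k => a k - ∑ j ∈ Finset.range k, ε j
  have hb : Antitone b := antitone_nat_of_succ_le fun k => by
    simp only [b, Finset.sum_range_succ]; linarith [hrec k]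
  have hbdd : BddBelow (Set.range b) := by
    obtain ⟨S, hS⟩ := hε.hasSum.tendsto_sum_nat.bddAbove_range
    refine ⟨-S, ?_⟩
    rintro _ ⟨k, rfl⟩
    linarith [ha k, hS ⟨k, rfl⟩]
  exact ⟨_, by simpa [b] using (tendsto_atTop_ciInf hb hbdd).add hε.hasSum.tendsto_sum_nat⟩

theorem tendsto_of_inertial_fejer {H : Type*} [NormedAddCommGroup H] {x w : ℕ → H} {q : H}
    {ε e : ℕ → ℝ} (hwx : ∀ k, ‖w k - x k‖ ≤ ε k) (hε : Summable ε) (he : ∀ k, 0 ≤ e k)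
    (hstep : ∀ k, ‖x (k + 1) - q‖ ^ 2 + e k ≤ ‖w k - q‖ ^ 2) :
    (∃ l, Tendsto (fun k => ‖x k - q‖) atTop (𝓝 l)) ∧ Tendsto e atTop (𝓝 0) := by
  have hwq : ∀ k, ‖w k - q‖ ≤ ‖x k - q‖ + ε k := fun k => by
    linarith [norm_sub_le_norm_sub_add_norm_sub (w k) (x k) q, hwx k]
  have hwq2 : ∀ k, ‖w k - q‖ ^ 2 ≤ (‖x k - q‖ + ε k) ^ 2 := fun k =>
    pow_le_pow_left₀ (norm_nonneg _) (hwq k) 2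
  have hrec : ∀ k, ‖x (k + 1) - q‖ ≤ ‖x k - q‖ + ε k := fun k => by
    have h : ‖x (k + 1) - q‖ ^ 2 ≤ ‖w k - q‖ ^ 2 := by linarith [hstep k, he k]
    exact ((pow_le_pow_iff_left₀ (norm_nonneg _) (norm_nonneg _) two_ne_zero).mp h).trans (hwq k)
  obtain ⟨l, hl⟩ :=
    exists_tendsto_of_le_add_summable (a := fun k => ‖x k - q‖) (fun k => norm_nonneg _) hrec hε
  refine ⟨⟨l, hl⟩, squeeze_zero (g := fun k => (‖x k - q‖ + ε k) ^ 2 - ‖x (k + 1) - q‖ ^ 2) he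
    (fun k => ?_) ?_⟩
  · exact (le_sub_iff_add_le'.mpr (hstep k)).trans (sub_le_sub_right (hwq2 k) _)
  · have := ((hl.add hε.tendsto_atTop_zero).pow 2).sub ((hl.comp (tendsto_add_atTop_nat 1)).pow 2)
    simpa using this

section Weak

variable {H : Type*} [NormedAddCommGroup H] [InnerProductSpace ℝ H]

def TendstoWeakly (x : ℕ → H) (p : H) : Prop :=
  ∀ u, Tendsto (fun k => ⟪x k, u⟫) atTop (𝓝 ⟪p, u⟫)

lemma TendstoWeakly.of_tendsto_norm_sub {x y : ℕ → H} {p : H} (hx : TendstoWeakly x p)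
    (hxy : Tendsto (fun k => ‖x k - y k‖) atTop (𝓝 0)) : TendstoWeakly y p := by
  intro u
  have hsmall : Tendsto (fun k => ⟪y k - x k, u⟫) atTop (𝓝 0) := by
    refine squeeze_zero_norm (fun k => ?_) (by simpa using hxy.mul_const ‖u‖)
    rw [Real.norm_eq_abs, norm_sub_rev (x k)]
    exact abs_real_inner_le_norm _ _
  simpa [inner_sub_left] using (hx u).add hsmall

lemma TendstoWeakly.exists_norm_le [CompleteSpace H] {x : ℕ → H} {p : H}
    (hx : TendstoWeakly x p) : ∃ M, ∀ k, ‖x k‖ ≤ M := by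
  obtain ⟨M, hM⟩ := banach_steinhaus (g := fun k => innerSL ℝ (x k)) fun u => by
    obtain ⟨M, hM⟩ := (hx u).norm.bddAbove_range
    exact ⟨M, fun k => hM ⟨k, rfl⟩⟩
  exact ⟨M, fun k => by simpa using hM k⟩

lemma TendstoWeakly.eq_of_forall_inner_sub_nonpos {C : Set H} {x : ℕ → H} {q p : H}
    (hx : TendstoWeakly x q) (hxC : ∀ k, x k ∈ C) (hp : ∀ c ∈ C, ⟪q - p, c - p⟫ ≤ 0) : q = p := by
  have hlim : Tendsto (fun k => ⟪x k - p, q - p⟫) atTop (𝓝 ⟪q - p, q - p⟫) := by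
    simpa only [inner_sub_left] using (hx (q - p)).sub_const ⟪p, q - p⟫
  refine sub_eq_zero.mp (real_inner_self_nonpos.mp (le_of_tendsto' hlim fun k => ?_))
  exact (real_inner_comm _ _).trans_le (hp _ (hxC k))

theorem exists_strictMono_tendstoWeakly [CompleteSpace H] {x : ℕ → H} {M : ℝ} (hM : ∀ k, ‖x k‖ ≤ M) :
    ∃ φ : ℕ → ℕ, StrictMono φ ∧ ∃ p, TendstoWeakly (x ∘ φ) p := by
  -- Sequential Banach–Alaoglu in the separable closed span `K` of the sequence; orthogonal
  -- projection onto `K` then extends the weak limit from `K` to all of `H`.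
  set K := (Submodule.span ℝ (Set.range x)).topologicalClosure
  have : TopologicalSpace.SeparableSpace K := by
    have := ((Set.countable_range x).isSeparable.span (R := ℝ)).closure
    rw [← Submodule.topologicalClosure_coe] at this
    exact this.separableSpace
  have hxK : ∀ k, x k ∈ K :=
    fun k => Submodule.le_topologicalClosure _ (Submodule.subset_span ⟨k, rfl⟩)
  set f : ℕ → StrongDual ℝ K := fun k => (innerSL ℝ (x k)).comp K.subtypeL
  have hf : ∀ k, StrongDual.toWeakDual (f k) ∈ WeakDual.toStrongDual ⁻¹' Metric.closedBall 0 M := by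
    intro k
    suffices ‖f k‖ ≤ M from (dist_zero_right (f k)).le.trans this
    refine ContinuousLinearMap.opNorm_le_bound _ (le_trans (norm_nonneg _) (hM 0)) fun v => ?_
    calc ‖f k v‖ ≤ ‖x k‖ * ‖v‖ := norm_inner_le_norm _ _
      _ ≤ M * ‖v‖ := by gcongr; exact hM k
  obtain ⟨g, -, φ, hφ, hg⟩ := WeakDual.isSeqCompact_closedBall ℝ K 0 M hf
  refine ⟨φ, hφ, ((InnerProductSpace.toDual ℝ K).symm (WeakDual.toStrongDual g) : K), fun u => ?_⟩
  have hproj : ∀ v ∈ K, ⟪v, u⟫ = ⟪v, K.starProjection u⟫ := fun v hv => by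
    rw [← sub_eq_zero, ← inner_sub_right, real_inner_comm]
    exact K.starProjection_inner_eq_zero u v hv
  set w : K := ⟨K.starProjection u, K.starProjection_apply_mem u⟩
  rw [hproj _ (Submodule.coe_mem _), show K.starProjection u = w from rfl, ← Submodule.coe_inner,
    InnerProductSpace.toDual_symm_apply]
  refine (((WeakDual.eval_continuous w).tendsto g).comp hg).congr fun k => ?_
  simp [f, hproj _ (hxK _), w]

lemma eq_of_tendstoWeakly_of_tendsto_norm_sub {x : ℕ → H} {p q : H} {lp lq : ℝ}
    (hp : Tendsto (fun k => ‖x k - p‖) atTop (𝓝 lp))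
    (hq : Tendsto (fun k => ‖x k - q‖) atTop (𝓝 lq)) {φ ψ : ℕ → ℕ}
    (hφ : Tendsto φ atTop atTop) (hψ : Tendsto ψ atTop atTop)
    (hxp : TendstoWeakly (x ∘ φ) p) (hxq : TendstoWeakly (x ∘ ψ) q) : p = q := by
  have hc : Tendsto (fun k => ⟪x k, p - q⟫) atTop
      (𝓝 ((lq ^ 2 - lp ^ 2 + (‖p‖ ^ 2 - ‖q‖ ^ 2)) / 2)) := by
    refine ((((hq.pow 2).sub (hp.pow 2)).add_const _).div_const 2).congr fun k => ?_
    rw [inner_sub_right]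
    linear_combination (norm_sub_sq_real (x k) q - norm_sub_sq_real (x k) p) / 2
  have h1 := tendsto_nhds_unique (hxp (p - q)) (hc.comp hφ)
  have h2 := tendsto_nhds_unique (hxq (p - q)) (hc.comp hψ)
  rw [← sub_eq_zero, ← inner_self_eq_zero (𝕜 := ℝ), inner_sub_left, h1, h2, sub_self]

theorem exists_tendstoWeakly_of_forall_tendsto_norm_sub [CompleteSpace H] {x : ℕ → H} {S : Set H}
    (hS : S.Nonempty) (hconv : ∀ q ∈ S, ∃ l, Tendsto (fun k => ‖x k - q‖) atTop (𝓝 l))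
    (hcluster : ∀ φ : ℕ → ℕ, Tendsto φ atTop atTop → ∀ q, TendstoWeakly (x ∘ φ) q → q ∈ S) :
    ∃ p ∈ S, TendstoWeakly x p := by
  obtain ⟨M, hM⟩ : ∃ M, ∀ k, ‖x k‖ ≤ M := by
    obtain ⟨s, hs⟩ := hS
    obtain ⟨l, hl⟩ := hconv s hs
    obtain ⟨M, hM⟩ := hl.bddAbove_range
    exact ⟨M + ‖s‖, fun k => by linarith [norm_sub_norm_le (x k) s, hM ⟨k, rfl⟩]⟩
  obtain ⟨φ, hφ, p, hp⟩ := exists_strictMono_tendstoWeakly hM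
  have hpS := hcluster φ hφ.tendsto_atTop p hp
  refine ⟨p, hpS, fun u => tendsto_of_subseq_tendsto fun ns hns => ?_⟩
  obtain ⟨ψ, hψ, q, hq⟩ := exists_strictMono_tendstoWeakly (x := x ∘ ns) fun k => hM (ns k)
  have hnsψ : Tendsto (ns ∘ ψ) atTop atTop := hns.comp hψ.tendsto_atTop
  have hqS := hcluster _ hnsψ q hq
  obtain ⟨lp, hlp⟩ := hconv p hpS
  obtain ⟨lq, hlq⟩ := hconv q hqS
  obtain rfl := eq_of_tendstoWeakly_of_tendsto_norm_sub hlp hlq hφ.tendsto_atTop hnsψ hp hq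
  exact ⟨ψ, hq u⟩

end Weak

section VarIneq

variable {H : Type*} [NormedAddCommGroup H] [InnerProductSpace ℝ H] {C : Set H} {F : H → H}

def SolvesVarIneq (C : Set H) (F : H → H) (q : H) : Prop :=
  q ∈ C ∧ ∀ z ∈ C, 0 ≤ ⟪F q, z - q⟫

lemma SolvesVarIneq.inner_nonneg {q y : H} (hq : SolvesVarIneq C F q)
    (hmono : ∀ u v, 0 ≤ ⟪F u - F v, u - v⟫) (hy : y ∈ C) : 0 ≤ ⟪F y, y - q⟫ := by
  have h := hmono y q
  rw [inner_sub_left] at h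
  linarith [hq.2 y hy]

theorem Convex.solvesVarIneq_of_forall_inner_nonneg (hC : Convex ℝ C) (hF : Continuous F)
    {q : H} (hq : q ∈ C) (h : ∀ z ∈ C, 0 ≤ ⟪F z, z - q⟫) : SolvesVarIneq C F q := by
  refine ⟨hq, fun z hz => ?_⟩
  have hcont : Continuous fun t : ℝ => ⟪F (q + t • (z - q)), z - q⟫ := by fun_prop
  have hlim := (hcont.tendsto 0).mono_left (nhdsWithin_le_nhds (s := Set.Ioi 0))
  simp only [zero_smul, add_zero] at hlim
  refine ge_of_tendsto hlim ?_
  filter_upwards [Ioo_mem_nhdsGT zero_lt_one] with t ht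
  have := h _ (hC.add_smul_sub_mem hq hz ⟨ht.1.le, ht.2.le⟩)
  rw [add_sub_cancel_left, real_inner_smul_right] at this
  exact (mul_nonneg_iff_of_pos_left ht.1).mp this

variable {w y d : H} {β ν : ℝ}

lemma inner_sub_le_mul_inner {c : H} (hy : ∀ c ∈ C, ⟪w - β • F w - y, c - y⟫ ≤ 0) (hc : c ∈ C) :
    ⟪w - y, c - y⟫ ≤ β * ⟪F w, c - y⟫ := by
  have h := hy c hc
  rw [sub_right_comm, inner_sub_left, real_inner_smul_left] at h
  linarith

lemma inner_le_mul_inner_of_proj {c : H} (hy : ∀ c ∈ C, ⟪w - β • F w - y, c - y⟫ ≤ 0)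
    (hc : c ∈ C) (hd : d = (w - y) - β • (F w - F y)) :
    ⟪d, c - y⟫ ≤ β * ⟪F y, c - y⟫ := by
  have h := inner_sub_le_mul_inner hy hc
  rw [hd]
  simp only [inner_sub_left, real_inner_smul_left] at h ⊢
  linarith

lemma one_sub_mul_sq_le_inner (hβ : 0 ≤ β) (hstep : β * ‖F w - F y‖ ≤ ν * ‖w - y‖)
    (hd : d = (w - y) - β • (F w - F y)) : (1 - ν) * ‖w - y‖ ^ 2 ≤ ⟪w - y, d⟫ := by
  have h : β * ⟪w - y, F w - F y⟫ ≤ ν * ‖w - y‖ ^ 2 :=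
    calc β * ⟪w - y, F w - F y⟫ ≤ β * (‖w - y‖ * ‖F w - F y‖) :=
          mul_le_mul_of_nonneg_left (real_inner_le_norm _ _) hβ
      _ = ‖w - y‖ * (β * ‖F w - F y‖) := by ring
      _ ≤ ‖w - y‖ * (ν * ‖w - y‖) := mul_le_mul_of_nonneg_left hstep (norm_nonneg _)
      _ = ν * ‖w - y‖ ^ 2 := by ring
  rw [hd, inner_sub_right, real_inner_smul_right, real_inner_self_eq_norm_sq]
  linarith

lemma norm_le_one_add_mul (hβ : 0 ≤ β) (hstep : β * ‖F w - F y‖ ≤ ν * ‖w - y‖)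
    (hd : d = (w - y) - β • (F w - F y)) : ‖d‖ ≤ (1 + ν) * ‖w - y‖ := by
  rw [hd]
  refine (norm_sub_le _ _).trans ?_
  rw [norm_smul, Real.norm_of_nonneg hβ]
  linarith

lemma div_norm_sq_mul_norm_sq (v d : H) : ⟪v, d⟫ / ‖d‖ ^ 2 * ‖d‖ ^ 2 = ⟪v, d⟫ := by
  rcases eq_or_ne d 0 with rfl | hd
  · simp
  · exact div_mul_cancel₀ _ (by positivity)

lemma one_sub_div_one_add_sq_mul_le {a D r ν : ℝ} (hD : 0 ≤ D) (hν₀ : 0 < 1 + ν) (hν₁ : ν ≤ 1)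
    (hr : (1 - ν) * a ^ 2 ≤ r * D ^ 2) (hDa : D ≤ (1 + ν) * a) :
    ((1 - ν) / (1 + ν)) ^ 2 * a ^ 2 ≤ r ^ 2 * D ^ 2 := by
  rw [div_pow, div_mul_eq_mul_div, div_le_iff₀ (by positivity)]
  rcases hD.eq_or_lt with rfl | hD
  · nlinarith [sq_nonneg a]
  have h1 : ((1 - ν) * a ^ 2) ^ 2 ≤ (r * D ^ 2) ^ 2 := pow_le_pow_left₀ (by positivity) hr 2
  have h2 : D ^ 2 ≤ ((1 + ν) * a) ^ 2 := pow_le_pow_left₀ hD.le hDa 2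
  refine le_of_mul_le_mul_right ?_ (pow_pos hD 2)
  calc (1 - ν) ^ 2 * a ^ 2 * D ^ 2 ≤ (1 - ν) ^ 2 * a ^ 2 * ((1 + ν) * a) ^ 2 := by gcongr
    _ = (1 + ν) ^ 2 * ((1 - ν) * a ^ 2) ^ 2 := by ring
    _ ≤ (1 + ν) ^ 2 * (r * D ^ 2) ^ 2 := by gcongr
    _ = r ^ 2 * D ^ 2 * (1 + ν) ^ 2 * D ^ 2 := by ring

lemma norm_sub_sq_le_sub_of_step {x q : H} {γ ρ : ℝ} (hγ : 0 ≤ γ) (hβ : 0 ≤ β) (hρ : 0 ≤ ρ)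
    (hρd : ρ * ‖d‖ ^ 2 = ⟪w - y, d⟫)
    (hdy : ⟪d, x - y⟫ ≤ β * ⟪F y, x - y⟫)
    (hx : ∀ c ∈ C, ⟪w - (γ * ρ * β) • F y - x, c - x⟫ ≤ 0) (hq : q ∈ C)
    (hyq : 0 ≤ ⟪F y, y - q⟫) :
    ‖x - q‖ ^ 2 ≤ ‖w - q‖ ^ 2 - γ * (2 - γ) * ρ ^ 2 * ‖d‖ ^ 2 := by
  have hsplit : ‖w - q‖ ^ 2 = ‖w - x‖ ^ 2 + 2 * ⟪w - x, x - q⟫ + ‖x - q‖ ^ 2 := by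
    rw [← norm_add_sq_real, sub_add_sub_cancel]
  have hproj : (γ * ρ * β) * ⟪F y, x - q⟫ ≤ ⟪w - x, x - q⟫ := by
    have h := hx q hq
    rw [sub_right_comm, inner_sub_left, real_inner_smul_left, ← neg_sub x q, inner_neg_right,
      inner_neg_right] at h
    linarith
  have hFy : ⟪F y, x - q⟫ = ⟪F y, x - y⟫ + ⟪F y, y - q⟫ := by
    rw [← inner_add_right, sub_add_sub_cancel]
  have hdx : ⟪d, x - y⟫ = ρ * ‖d‖ ^ 2 - ⟪w - x, d⟫ := by
    rw [hρd, real_inner_comm d (w - y), real_inner_comm d (w - x), ← inner_sub_right,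
      sub_sub_sub_cancel_left]
  have hγρ : 0 ≤ γ * ρ := mul_nonneg hγ hρ
  have hsq : 0 ≤ ‖(w - x) - (γ * ρ) • d‖ ^ 2 := sq_nonneg _
  rw [norm_sub_sq_real, real_inner_smul_right, norm_smul, Real.norm_of_nonneg hγρ] at hsq
  have h1 := congrArg (γ * ρ * β * ·) hFy
  have h2 := congrArg (γ * ρ * ·) hdx
  nlinarith [mul_le_mul_of_nonneg_left hdy hγρ, mul_nonneg (mul_nonneg hγρ hβ) hyq]

lemma neg_mul_le_inner_of_proj {z : H} {b L : ℝ} (hb : 0 < b) (hbβ : b ≤ β)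
    (hy : ∀ c ∈ C, ⟪w - β • F w - y, c - y⟫ ≤ 0) (hLip : ‖F w - F y‖ ≤ L * ‖w - y‖) (hz : z ∈ C) :
    -((b⁻¹ + L) * (‖w - y‖ * ‖z - y‖)) ≤ ⟪F y, z - y⟫ := by
  have hwz : -(‖w - y‖ * ‖z - y‖) ≤ b * ⟪F w, z - y⟫ := by
    have h := inner_sub_le_mul_inner hy hz
    have hneg := neg_le_of_abs_le (abs_real_inner_le_norm (w - y) (z - y))
    rcases le_total 0 ⟪F w, z - y⟫ with h0 | h0
    · nlinarith [mul_nonneg (norm_nonneg (w - y)) (norm_nonneg (z - y))]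
    · nlinarith
  have hFwy : ⟪F w - F y, z - y⟫ ≤ L * (‖w - y‖ * ‖z - y‖) := by
    calc ⟪F w - F y, z - y⟫ ≤ ‖F w - F y‖ * ‖z - y‖ := real_inner_le_norm _ _
      _ ≤ L * ‖w - y‖ * ‖z - y‖ := by gcongr
      _ = L * (‖w - y‖ * ‖z - y‖) := by ring
  rw [inner_sub_left] at hFwy
  have : -(b⁻¹ * (‖w - y‖ * ‖z - y‖)) ≤ ⟪F w, z - y⟫ := by
    rw [neg_le, ← div_eq_inv_mul, le_div_iff₀' hb]
    linarith
  linarith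

theorem norm_sub_sq_add_le_of_step {x q : H} {γ ρ : ℝ} (hγ₀ : 0 ≤ γ) (hγ₂ : γ ≤ 2)
    (hν₀ : 0 < 1 + ν) (hν₁ : ν ≤ 1) (hβ : 0 ≤ β)
    (hy : ∀ c ∈ C, ⟪w - β • F w - y, c - y⟫ ≤ 0) (hstep : β * ‖F w - F y‖ ≤ ν * ‖w - y‖)
    (hd : d = (w - y) - β • (F w - F y)) (hρ : ρ = ⟪w - y, d⟫ / ‖d‖ ^ 2)
    (hx : ∀ c ∈ C, ⟪w - (γ * ρ * β) • F y - x, c - x⟫ ≤ 0) (hxC : x ∈ C) (hq : q ∈ C)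
    (hyq : 0 ≤ ⟪F y, y - q⟫) :
    ‖x - q‖ ^ 2 + γ * (2 - γ) * ((1 - ν) / (1 + ν)) ^ 2 * ‖w - y‖ ^ 2 ≤ ‖w - q‖ ^ 2 := by
  have hρd : ρ * ‖d‖ ^ 2 = ⟪w - y, d⟫ := hρ ▸ div_norm_sq_mul_norm_sq _ _
  have hinner := one_sub_mul_sq_le_inner hβ hstep hd
  have hρ₀ : 0 ≤ ρ := by
    rw [hρ]
    exact div_nonneg (by nlinarith [sq_nonneg ‖w - y‖]) (by positivity)
  have hlow := one_sub_div_one_add_sq_mul_le (norm_nonneg d) hν₀ hν₁ (hρd ▸ hinner)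
    (norm_le_one_add_mul hβ hstep hd)
  have hdesc := norm_sub_sq_le_sub_of_step hγ₀ hβ hρ₀ hρd (inner_le_mul_inner_of_proj hy hxC hd)
    hx hq hyq
  nlinarith [mul_le_mul_of_nonneg_left hlow (mul_nonneg hγ₀ (sub_nonneg.2 hγ₂))]

theorem solvesVarIneq_of_tendstoWeakly [CompleteSpace H] (hC : Convex ℝ C) {P : H → H}
    (hPmem : ∀ u, P u ∈ C) (hPchar : ∀ u, ∀ c ∈ C, ⟪u - P u, c - P u⟫ ≤ 0)
    (hmono : ∀ u v, 0 ≤ ⟪F u - F v, u - v⟫) {L : ℝ} (hLip : ∀ u v, ‖F u - F v‖ ≤ L * ‖u - v‖)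
    {w y : ℕ → H} {β : ℕ → ℝ} {b : ℝ} (hb : 0 < b) (hβ : ∀ k, b ≤ β k)
    (hy : ∀ k, y k = P (w k - β k • F (w k)))
    (hwy : Tendsto (fun k => ‖w k - y k‖) atTop (𝓝 0)) {q : H} (hq : TendstoWeakly y q) :
    SolvesVarIneq C F q := by
  have hyC : ∀ k, y k ∈ C := fun k => by rw [hy k]; exact hPmem _
  have hyproj : ∀ k, ∀ c ∈ C, ⟪w k - β k • F (w k) - y k, c - y k⟫ ≤ 0 := fun k => by
    rw [hy k]; exact hPchar _
  have hqC : q ∈ C := hq.eq_of_forall_inner_sub_nonpos hyC (hPchar q) ▸ hPmem q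
  have hF : Continuous F := (LipschitzWith.of_dist_le_mul (K := L.toNNReal) fun u v => by
    simpa only [dist_eq_norm] using (hLip u v).trans
      (mul_le_mul_of_nonneg_right (Real.le_coe_toNNReal L) (norm_nonneg _))).continuous
  refine hC.solvesVarIneq_of_forall_inner_nonneg hF hqC fun z hz => ?_
  obtain ⟨M, hM⟩ := hq.exists_norm_le
  have hsmall : Tendsto (fun k => ‖w k - y k‖ * ‖z - y k‖) atTop (𝓝 0) := by
    refine squeeze_zero (fun k => by positivity) (fun k => ?_)
      (by simpa using hwy.mul_const (‖z‖ + M))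
    exact mul_le_mul_of_nonneg_left ((norm_sub_le _ _).trans (by linarith [hM k])) (norm_nonneg _)
  have hlow : ∀ k, -((b⁻¹ + L) * (‖w k - y k‖ * ‖z - y k‖)) ≤ ⟪F z, z - y k⟫ := fun k => by
    have h := hmono z (y k)
    rw [inner_sub_left] at h
    linarith [neg_mul_le_inner_of_proj hb (hβ k) (hyproj k) (hLip _ _) hz]
  have hlim : Tendsto (fun k => ⟪F z, z - y k⟫) atTop (𝓝 ⟪F z, z - q⟫) := by
    simpa only [inner_sub_right, real_inner_comm (F z)] using (hq (F z)).const_sub ⟪F z, z⟫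
  exact le_of_tendsto_of_tendsto' (by simpa using (hsmall.const_mul (b⁻¹ + L)).neg) hlim hlow

end VarIneq

theorem stmt_17_general {H : Type*} [NormedAddCommGroup H] [InnerProductSpace ℝ H]
    [CompleteSpace H]
    (C : Set H) (hCcv : Convex ℝ C)
    (P : H → H) (hPmem : ∀ u : H, P u ∈ C)
    (hPchar : ∀ u : H, ∀ c ∈ C, ⟪u - P u, c - P u⟫ ≤ 0)
    (F : H → H) (hmono : ∀ u v : H, 0 ≤ ⟪F u - F v, u - v⟫)
    (L : ℝ) (hLip : ∀ u v : H, ‖F u - F v‖ ≤ L * ‖u - v‖)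
    (hSOL : ∃ p ∈ C, ∀ z ∈ C, 0 ≤ ⟪F p, z - p⟫)
    (ν γ : ℝ) (hν : ν ∈ Set.Ioo (0 : ℝ) 1) (hγ : γ ∈ Set.Ioo (0 : ℝ) 2)
    (α : ℕ → ℝ) (hα : ∀ k, α k ∈ Set.Icc (0 : ℝ) 1)
    (x xm y w : ℕ → H) (β : ℕ → ℝ) (d : ℕ → H) (ρ : ℕ → ℝ)
    (hw : ∀ k, w k = x k + α k • (x k - xm k))
    (hβpos : ∀ k, 0 < β k) (hβinf : ∃ b > (0 : ℝ), ∀ k, b ≤ β k)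
    (hy : ∀ k, y k = P (w k - β k • F (w k)))
    (hstep : ∀ k, β k * ‖F (w k) - F (y k)‖ ≤ ν * ‖w k - y k‖)
    (hd : ∀ k, d k = (w k - y k) - β k • (F (w k) - F (y k)))
    (hρ : ∀ k, ρ k = ⟪w k - y k, d k⟫ / ‖d k‖ ^ 2)
    (hx : ∀ k, x (k + 1) = P (w k - (γ * ρ k * β k) • F (y k)))
    (hsum : Summable (fun k => α k * ‖x k - xm k‖)) :
    ∃ xhat, (xhat ∈ C ∧ ∀ z ∈ C, 0 ≤ ⟪F xhat, z - xhat⟫) ∧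
      ∀ u : H, Filter.Tendsto (fun k => ⟪x k, u⟫) Filter.atTop (nhds ⟪xhat, u⟫) := by
  obtain ⟨b, hb, hβb⟩ := hβinf
  set κ := γ * (2 - γ) * ((1 - ν) / (1 + ν)) ^ 2
  have hκ : 0 < κ := mul_pos (mul_pos hγ.1 (by linarith [hγ.2]))
    (pow_pos (div_pos (by linarith [hν.2]) (by linarith [hν.1])) 2)
  have hyproj : ∀ k, ∀ c ∈ C, ⟪w k - β k • F (w k) - y k, c - y k⟫ ≤ 0 := fun k => by
    rw [hy k]; exact hPchar _
  have hwx : ∀ k, ‖w k - x k‖ = α k * ‖x k - xm k‖ := fun k => by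
    rw [hw k, add_sub_cancel_left, norm_smul, Real.norm_of_nonneg (hα k).1]
  have hfejer : ∀ q, SolvesVarIneq C F q → (∃ l, Tendsto (fun k => ‖x k - q‖) atTop (𝓝 l)) ∧
      Tendsto (fun k => κ * ‖w k - y k‖ ^ 2) atTop (𝓝 0) := fun q hq =>
    tendsto_of_inertial_fejer (fun k => (hwx k).le) hsum (fun k => by positivity) fun k =>
      norm_sub_sq_add_le_of_step hγ.1.le hγ.2.le (by linarith [hν.1]) hν.2.le (hβpos k).le
        (hyproj k) (hstep k) (hd k) (hρ k) (by rw [hx k]; exact hPchar _)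
        (by rw [hx k]; exact hPmem _) hq.1 (hq.inner_nonneg hmono (by rw [hy k]; exact hPmem _))
  obtain ⟨p, hp⟩ := hSOL
  have hwy : Tendsto (fun k => ‖w k - y k‖) atTop (𝓝 0) := by
    simpa [← mul_assoc, inv_mul_cancel₀ hκ.ne'] using ((hfejer p hp).2.const_mul κ⁻¹).sqrt
  have hxy : Tendsto (fun k => ‖x k - y k‖) atTop (𝓝 0) := by
    refine squeeze_zero (fun k => norm_nonneg _) (fun k => ?_)
      (by simpa using hsum.tendsto_atTop_zero.add hwy)
    rw [← hwx, norm_sub_rev (w k)]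
    exact norm_sub_le_norm_sub_add_norm_sub _ _ _
  exact exists_tendstoWeakly_of_forall_tendsto_norm_sub ⟨p, hp⟩ (fun q hq => (hfejer q hq).1)
    fun φ hφ q hxq => solvesVarIneq_of_tendstoWeakly hCcv hPmem hPchar hmono hLip hb
      (fun k => hβb (φ k)) (fun k => hy (φ k)) (hwy.comp hφ) (hxq.of_tendsto_norm_sub (hxy.comp hφ))

/-- `xm k` plays the role of `x^{k-1}` (with `xm 0` the arbitrary starting point `x^{-1}`). -/
theorem stmt_17 {H : Type*} [NormedAddCommGroup H] [InnerProductSpace ℝ H]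
    [CompleteSpace H]
    (C : Set H) (hCne : C.Nonempty) (hCcl : IsClosed C) (hCcv : Convex ℝ C)
    (P : H → H) (hPmem : ∀ u : H, P u ∈ C)
    (hPchar : ∀ u : H, ∀ c ∈ C, ⟪u - P u, c - P u⟫ ≤ 0)
    (F : H → H) (hmono : ∀ u v : H, 0 ≤ ⟪F u - F v, u - v⟫)
    (L : ℝ) (hL : 0 < L) (hLip : ∀ u v : H, ‖F u - F v‖ ≤ L * ‖u - v‖)
    (hSOL : ∃ p ∈ C, ∀ z ∈ C, 0 ≤ ⟪F p, z - p⟫)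
    (ν γ : ℝ) (hν : ν ∈ Set.Ioo (0 : ℝ) 1) (hγ : γ ∈ Set.Ioo (0 : ℝ) 2)
    (α : ℕ → ℝ) (hα : ∀ k, α k ∈ Set.Icc (0 : ℝ) 1)
    (x xm y w : ℕ → H) (β : ℕ → ℝ) (d : ℕ → H) (ρ : ℕ → ℝ)
    (hxm : ∀ k, xm (k + 1) = x k)
    (hw : ∀ k, w k = x k + α k • (x k - xm k))
    (hβpos : ∀ k, 0 < β k) (hβinf : ∃ b > (0 : ℝ), ∀ k, b ≤ β k)
    (hy : ∀ k, y k = P (w k - β k • F (w k)))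
    (hstep : ∀ k, β k * ‖F (w k) - F (y k)‖ ≤ ν * ‖w k - y k‖)
    (hd : ∀ k, d k = (w k - y k) - β k • (F (w k) - F (y k)))
    (hdne : ∀ k, d k ≠ 0)
    (hρ : ∀ k, ρ k = ⟪w k - y k, d k⟫ / ‖d k‖ ^ 2)
    (hx : ∀ k, x (k + 1) = P (w k - (γ * ρ k * β k) • F (y k)))
    (hsum : Summable (fun k => α k * ‖x k - xm k‖)) :
    ∃ xhat, (xhat ∈ C ∧ ∀ z ∈ C, 0 ≤ ⟪F xhat, z - xhat⟫) ∧
      ∀ u : H, Filter.Tendsto (fun k => ⟪x k, u⟫) Filter.atTop (nhds ⟪xhat, u⟫) :=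
  stmt_17_general C hCcv P hPmem hPchar F hmono L hLip hSOL ν γ hν hγ α hα x xm y w β d ρ hw hβpos
    hβinf hy hstep hd hρ hx hsum
end

section
/- (One-step Fejér contraction of the PC-algorithm I step.) Let ν ∈ (0,1), γ ∈ (0,2), w ∈ H and x* ∈ SOL(C,F). Let β > 0 be such that β‖F(w) − F(y)‖ ≤ ν‖w − y‖, where y := P_C(w − β F(w)). Define d := (w − y) − β(F(w) − F(y)) and assume d ≠ 0; set ρ := ⟨w − y, d⟩/‖d‖² and x⁺ := w − γ ρ d. Then ‖x⁺ − x*‖² ≤ ‖w − x*‖² − ((2 − γ)/γ)·‖x⁺ − w‖². -/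
set_option maxHeartbeats 1000000


open RealInnerProductSpace

theorem stmt_18 {H : Type*} [NormedAddCommGroup H] [InnerProductSpace ℝ H]
    [CompleteSpace H]
    (C : Set H) (hCne : C.Nonempty) (hCcl : IsClosed C) (hCcv : Convex ℝ C)
    (P : H → H) (hPmem : ∀ u : H, P u ∈ C)
    (hPchar : ∀ u : H, ∀ c ∈ C, ⟪u - P u, c - P u⟫ ≤ 0)
    (F : H → H) (hmono : ∀ u v : H, 0 ≤ ⟪F u - F v, u - v⟫)
    (L : ℝ) (hL : 0 < L) (hLip : ∀ u v : H, ‖F u - F v‖ ≤ L * ‖u - v‖)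
    (ν γ : ℝ) (hν : ν ∈ Set.Ioo (0 : ℝ) 1) (hγ : γ ∈ Set.Ioo (0 : ℝ) 2)
    (w xstar : H) (hstar : xstar ∈ C ∧ ∀ z ∈ C, 0 ≤ ⟪F xstar, z - xstar⟫)
    (β : ℝ) (hβ : 0 < β) (y : H) (hy : y = P (w - β • F w))
    (hstep : β * ‖F w - F y‖ ≤ ν * ‖w - y‖)
    (d : H) (hd : d = (w - y) - β • (F w - F y)) (hdne : d ≠ 0)
    (ρ : ℝ) (hρ : ρ = ⟪w - y, d⟫ / ‖d‖ ^ 2)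
    (xplus : H) (hxplus : xplus = w - (γ * ρ) • d) :
    ‖xplus - xstar‖ ^ 2 ≤ ‖w - xstar‖ ^ 2 - ((2 - γ) / γ) * ‖xplus - w‖ ^ 2 := by
  obtain ⟨hν0, hν1⟩ := hν
  obtain ⟨hγ0, hγ2⟩ := hγ
  have hdpos : (0:ℝ) < ‖d‖ := norm_pos_iff.mpr hdne
  -- ⟪w - y, d⟫ ≥ (1-ν)‖w-y‖² ≥ 0
  have hwy : ⟪w - y, d⟫ = ‖w - y‖ ^ 2 - β * ⟪w - y, F w - F y⟫ := by
    rw [hd, inner_sub_right, real_inner_smul_right, real_inner_self_eq_norm_sq]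
  have hcs : ⟪w - y, F w - F y⟫ ≤ ‖w - y‖ * ‖F w - F y‖ := real_inner_le_norm _ _
  have hwyd : (1 - ν) * ‖w - y‖ ^ 2 ≤ ⟪w - y, d⟫ := by
    have h1 : β * ⟪w - y, F w - F y⟫ ≤ ‖w - y‖ * (β * ‖F w - F y‖) := by
      nlinarith [mul_le_mul_of_nonneg_left hcs hβ.le]
    have h2 : ‖w - y‖ * (β * ‖F w - F y‖) ≤ ν * ‖w - y‖ ^ 2 := by
      nlinarith [mul_le_mul_of_nonneg_left hstep (norm_nonneg (w - y))]
    nlinarith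
  have hwyd_nn : 0 ≤ ⟪w - y, d⟫ := by nlinarith [sq_nonneg ‖w - y‖]
  have hρnn : 0 ≤ ρ := by
    rw [hρ]
    positivity
  have hρeq : ρ * ‖d‖ ^ 2 = ⟪w - y, d⟫ := by
    rw [hρ]
    field_simp
  -- projection characterization
  have hproj : ⟪(w - β • F w) - y, xstar - y⟫ ≤ 0 := by
    rw [hy]; exact hPchar _ xstar hstar.1
  have hyC : y ∈ C := by rw [hy]; exact hPmem _
  have hmon : 0 ≤ ⟪F y - F xstar, y - xstar⟫ := hmono y xstar
  have hsol : 0 ≤ ⟪F xstar, y - xstar⟫ := hstar.2 y hyC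
  have hFy : 0 ≤ ⟪y - xstar, F y⟫ := by
    rw [inner_sub_left] at hmon
    rw [real_inner_comm]
    linarith
  have hA : 0 ≤ ⟪y - xstar, (w - β • F w) - y⟫ := by
    rw [real_inner_comm, show y - xstar = -(xstar - y) by abel, inner_neg_right]
    linarith
  have hkey : ⟪w - y, d⟫ ≤ ⟪w - xstar, d⟫ := by
    have hsplit : ⟪w - xstar, d⟫ - ⟪w - y, d⟫ = ⟪y - xstar, d⟫ := by
      rw [← inner_sub_left]
      congr 1
      abel
    have hexp : ⟪y - xstar, d⟫
        = ⟪y - xstar, (w - β • F w) - y⟫ + β * ⟪y - xstar, F y⟫ := by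
      simp only [hd, inner_sub_right, real_inner_smul_right]
      ring
    nlinarith [mul_nonneg hβ.le hFy]
  -- expansions
  have hxw : ‖xplus - w‖ ^ 2 = (γ * ρ) ^ 2 * ‖d‖ ^ 2 := by
    have h : xplus - w = -((γ * ρ) • d) := by rw [hxplus]; abel
    rw [h, norm_neg, norm_smul, mul_pow, Real.norm_eq_abs, sq_abs]
  have hxs : ‖xplus - xstar‖ ^ 2
      = ‖w - xstar‖ ^ 2 - 2 * (γ * ρ) * ⟪w - xstar, d⟫ + (γ * ρ) ^ 2 * ‖d‖ ^ 2 := by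
    have h : xplus - xstar = (w - xstar) - (γ * ρ) • d := by rw [hxplus]; abel
    rw [h, norm_sub_sq_real, real_inner_smul_right, norm_smul, mul_pow,
      Real.norm_eq_abs, sq_abs]
    ring
  rw [hxs, hxw]
  have hdiv : (2 - γ) / γ * ((γ * ρ) ^ 2 * ‖d‖ ^ 2) = (2 - γ) * γ * (ρ ^ 2 * ‖d‖ ^ 2) := by
    field_simp
  rw [hdiv]
  have key2 : ρ * ⟪w - y, d⟫ ≤ ρ * ⟪w - xstar, d⟫ :=
    mul_le_mul_of_nonneg_left hkey hρnn
  have h7 : 2 * γ * (ρ ^ 2 * ‖d‖ ^ 2) = 2 * γ * (ρ * ⟪w - y, d⟫) := by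
    rw [← hρeq]; ring
  have h6 : 2 * γ * (ρ * ⟪w - y, d⟫) ≤ 2 * γ * (ρ * ⟪w - xstar, d⟫) := by
    nlinarith
  nlinarith [h6, h7]
end
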